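/- arXiv:1307.5339 — 6 statements merged into one kernel-verified Lean document; each statement's English description precedes it below -/
import Mathlib

section
/- Let p ≥ 1, let S be a p×p real symmetric positive semidefinite matrix, let λ > 0, let c : {1,…,p} → {1,…,K} be a partition of the indices into K groups, and suppose that |S_{j j'}| ≤ λ for all pairs j, j' with c(j) ≠ c(j'). Then every graphical lasso solution Θ̂ for S with tuning parameter λ satisfies Θ̂_{j j'} = 0 for all pairs j, j' with c(j) ≠ c(j'); that is, Θ̂ is block diagonal with respect to the partition c. -/
open Matrix BigOperators

/-- The graphical lasso objective: log det Θ − tr(SΘ) − λ ∑_{j ≠ j'} |Θ_{jj'}|. -/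
noncomputable def glassoObj {n : Type*} [Fintype n] [DecidableEq n]
    (S : Matrix n n ℝ) (lam : ℝ) (Θ : Matrix n n ℝ) : ℝ :=
  Real.log Θ.det - (S * Θ).trace -
    lam * ∑ j : n, ∑ j' : n, (if j ≠ j' then |Θ j j'| else 0)

/-- A graphical lasso solution: a symmetric positive definite matrix maximizing the
graphical lasso objective over all symmetric positive definite matrices. -/
def IsGlassoSolution {n : Type*} [Fintype n] [DecidableEq n]
    (S : Matrix n n ℝ) (lam : ℝ) (Θhat : Matrix n n ℝ) : Prop :=
  Θhat.IsSymm ∧ Θhat.PosDef ∧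
    ∀ Θ : Matrix n n ℝ, Θ.IsSymm → Θ.PosDef →
      glassoObj S lam Θ ≤ glassoObj S lam Θhat

/-!
Zeroing the between-cluster entries of a solution `Θ̂` gives its block-diagonal part `D`, which is
again positive definite. Because `|S j j'| ≤ λ` between clusters, this cannot decrease
`-tr(S Θ) - λ ∑_{j ≠ j'} |Θ j j'|`. Because `D⁻¹` is block diagonal, `tr(Θ̂ D⁻¹) = tr(D D⁻¹) = p`,
and the strict inequality `log det A < log det B + tr(A B⁻¹) - p` for positive definite `A ≠ B`
(read off the eigenvalues of `B^{-1/2} A B^{-1/2}` via `log x ≤ x - 1`) then makes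
`log det Θ̂ < log det D` unless `Θ̂ = D`. Optimality of `Θ̂` therefore forces `Θ̂ = D`.
-/

namespace Matrix

section BlockDiagonal

variable {n ι α : Type*} [DecidableEq ι] (c : n → ι)

def blockDiagPart [Zero α] (A : Matrix n n α) : Matrix n n α :=
  of fun i j => if c i = c j then A i j else 0

def IsBlockDiagonal [Zero α] (A : Matrix n n α) : Prop :=
  ∀ i j, c i ≠ c j → A i j = 0

variable {c}

@[simp]
lemma blockDiagPart_apply [Zero α] (A : Matrix n n α) (i j : n) :
    blockDiagPart c A i j = if c i = c j then A i j else 0 :=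
  rfl

lemma isBlockDiagonal_blockDiagPart [Zero α] (A : Matrix n n α) :
    IsBlockDiagonal c (blockDiagPart c A) := fun _ _ h => if_neg h

lemma IsBlockDiagonal.blockDiagPart_eq [Zero α] {A : Matrix n n α} (hA : IsBlockDiagonal c A) :
    blockDiagPart c A = A := by
  ext i j
  by_cases h : c i = c j
  · simp [h]
  · simp [h, hA i j h]

lemma blockDiagPart_one [DecidableEq n] [Zero α] [One α] :
    blockDiagPart c (1 : Matrix n n α) = 1 :=
  IsBlockDiagonal.blockDiagPart_eq fun _ _ h => one_apply_ne fun hij => h (congrArg c hij)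

lemma conjTranspose_blockDiagPart [AddMonoid α] [StarAddMonoid α] (A : Matrix n n α) :
    (blockDiagPart c A)ᴴ = blockDiagPart c Aᴴ := by
  ext i j
  simp [eq_comm, apply_ite star]

lemma transpose_blockDiagPart [Zero α] (A : Matrix n n α) :
    (blockDiagPart c A)ᵀ = blockDiagPart c Aᵀ := by
  ext i j
  simp [eq_comm]

lemma IsHermitian.blockDiagPart [AddMonoid α] [StarAddMonoid α] {A : Matrix n n α}
    (hA : A.IsHermitian) : (blockDiagPart c A).IsHermitian := by
  rw [IsHermitian, conjTranspose_blockDiagPart, hA.eq]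

lemma IsSymm.blockDiagPart [Zero α] {A : Matrix n n α} (hA : A.IsSymm) :
    (blockDiagPart c A).IsSymm := by
  rw [IsSymm, transpose_blockDiagPart, hA.eq]

variable [Fintype n]

lemma IsBlockDiagonal.mul_blockDiagPart [NonUnitalNonAssocSemiring α] {A : Matrix n n α}
    (hA : IsBlockDiagonal c A) (B : Matrix n n α) :
    A * blockDiagPart c B = blockDiagPart c (A * B) := by
  ext i j
  simp only [mul_apply, blockDiagPart_apply]
  split_ifs with hij
  · refine Finset.sum_congr rfl fun k _ => ?_
    by_cases hik : c i = c k
    · rw [if_pos (hik.symm.trans hij)]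
    · rw [hA i k hik, zero_mul, zero_mul]
  · refine Finset.sum_eq_zero fun k _ => ?_
    by_cases hik : c i = c k
    · rw [if_neg fun hkj => hij (hik.trans hkj), mul_zero]
    · rw [hA i k hik, zero_mul]

lemma IsBlockDiagonal.inv [DecidableEq n] [CommRing α] {A : Matrix n n α}
    (hA : IsBlockDiagonal c A) : IsBlockDiagonal c A⁻¹ := by
  by_cases hdet : IsUnit A.det
  · have hinv : A⁻¹ = blockDiagPart c A⁻¹ := inv_eq_right_inv <| by
      rw [hA.mul_blockDiagPart, mul_nonsing_inv _ hdet, blockDiagPart_one]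
    rw [hinv]
    exact isBlockDiagonal_blockDiagPart _
  · rw [nonsing_inv_apply_not_isUnit _ hdet]
    exact fun _ _ _ => rfl

lemma IsBlockDiagonal.trace_blockDiagPart_mul [NonUnitalNonAssocSemiring α] {B : Matrix n n α}
    (hB : IsBlockDiagonal c B) (A : Matrix n n α) :
    (blockDiagPart c A * B).trace = (A * B).trace := by
  simp only [trace, diag_apply, mul_apply, blockDiagPart_apply]
  refine Finset.sum_congr rfl fun i _ => Finset.sum_congr rfl fun k _ => ?_
  by_cases hik : c i = c k
  · rw [if_pos hik]
  · rw [if_neg hik, hB k i fun h => hik h.symm, zero_mul, mul_zero]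

lemma dotProduct_blockDiagPart_mulVec [Fintype ι] [CommSemiring α] [StarRing α]
    (A : Matrix n n α) (x : n → α) :
    star x ⬝ᵥ (blockDiagPart c A *ᵥ x) =
      ∑ k, star (fun i => if c i = k then x i else 0) ⬝ᵥ
        (A *ᵥ fun i => if c i = k then x i else 0) := by
  simp only [dotProduct, mulVec, Finset.mul_sum, Pi.star_apply, blockDiagPart_apply]
  rw [eq_comm, Finset.sum_comm]
  refine Finset.sum_congr rfl fun i _ => ?_
  rw [Finset.sum_comm]
  refine Finset.sum_congr rfl fun j _ => ?_
  by_cases hij : c i = c j <;> simp [hij, apply_ite star]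

open scoped ComplexOrder in
lemma PosDef.blockDiagPart [Fintype ι] {𝕜 : Type*} [RCLike 𝕜] {A : Matrix n n 𝕜}
    (hA : A.PosDef) : (blockDiagPart c A).PosDef := by
  refine .of_dotProduct_mulVec_pos hA.isHermitian.blockDiagPart fun x hx => ?_
  obtain ⟨i, hi⟩ := Function.ne_iff.mp hx
  rw [dotProduct_blockDiagPart_mulVec]
  refine Finset.sum_pos' (fun k _ => hA.posSemidef.dotProduct_mulVec_nonneg _)
    ⟨c i, Finset.mem_univ _, hA.dotProduct_mulVec_pos ?_⟩
  exact Function.ne_iff.mpr ⟨i, by simpa using hi⟩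

end BlockDiagonal

section LogDet

variable {n : Type*} [Fintype n] [DecidableEq n]

lemma PosDef.log_det_lt_trace_sub_card {N : Matrix n n ℝ} (hN : N.PosDef) (hN1 : N ≠ 1) :
    Real.log N.det < N.trace - Fintype.card n := by
  have hH : N.IsHermitian := hN.isHermitian
  have hpos : ∀ i, 0 < hH.eigenvalues i := hN.eigenvalues_pos
  obtain ⟨i, hi⟩ : ∃ i, hH.eigenvalues i ≠ 1 := by
    refine Function.ne_iff.mp fun h => hN1 ?_
    rw [hH.spectral_theorem, h]
    simp
  rw [hH.det_eq_prod_eigenvalues, hH.trace_eq_sum_eigenvalues]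
  simp only [RCLike.ofReal_real_eq_id, id]
  rw [Real.log_prod fun i _ => (hpos i).ne']
  calc ∑ i, Real.log (hH.eigenvalues i) < ∑ i, (hH.eigenvalues i - 1) :=
        Finset.sum_lt_sum (fun i _ => Real.log_le_sub_one_of_pos (hpos i))
          ⟨i, Finset.mem_univ _, Real.log_lt_sub_one_of_pos (hpos i) hi⟩
    _ = ∑ i, hH.eigenvalues i - Fintype.card n := by simp [Finset.sum_sub_distrib]

open scoped MatrixOrder in
lemma PosDef.log_det_lt_log_det_add_trace_mul_inv_sub_card {A B : Matrix n n ℝ} (hA : A.PosDef)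
    (hB : B.PosDef) (hAB : A ≠ B) :
    Real.log A.det < Real.log B.det + (A * B⁻¹).trace - Fintype.card n := by
  set R := CFC.sqrt B⁻¹
  have hRR : R * R = B⁻¹ := CFC.sqrt_mul_sqrt_self _ hB.inv.posSemidef.nonneg
  have hRherm : R.IsHermitian := (CFC.sqrt_nonneg _).posSemidef.isHermitian
  have hRunit : IsUnit R := isUnit_of_mul_isUnit_left (hRR ▸ hB.inv.isUnit)
  have hN : (R * A * R).PosDef := by
    simpa only [hRherm.eq] using hA.conjTranspose_mul_mul_same (mulVec_injective_of_isUnit hRunit)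
  have hdet : (R * A * R).det = A.det * B⁻¹.det := by
    rw [← hRR, det_mul, det_mul, det_mul]; ring
  have htrace : (R * A * R).trace = (A * B⁻¹).trace := by
    rw [trace_mul_comm, ← Matrix.mul_assoc, hRR, trace_mul_comm]
  have hN1 : R * A * R ≠ 1 := by
    intro h
    have hAB1 : A * B⁻¹ = 1 := by
      rw [← hRR, ← Matrix.mul_assoc, mul_eq_one_comm, ← Matrix.mul_assoc, h]
    apply hAB
    calc A = A * B⁻¹ * B := by
          rw [Matrix.mul_assoc, nonsing_inv_mul _ hB.det_pos.ne'.isUnit, mul_one]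
      _ = B := by rw [hAB1, one_mul]
  have := hN.log_det_lt_trace_sub_card hN1
  rw [hdet, htrace, Real.log_mul hA.det_pos.ne' hB.inv.det_pos.ne', det_nonsing_inv,
    Ring.inverse_eq_inv', Real.log_inv] at this
  linarith

end LogDet

end Matrix

lemma glassoObj_sub_glassoObj_blockDiagPart_le {n ι : Type*} [Fintype n] [DecidableEq n]
    [DecidableEq ι] {c : n → ι} {S : Matrix n n ℝ} {lam : ℝ}
    (hsmall : ∀ i j, c i ≠ c j → |S i j| ≤ lam) {Θ : Matrix n n ℝ} (hΘ : Θ.IsSymm) :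
    glassoObj S lam Θ - glassoObj S lam (blockDiagPart c Θ) ≤
      Real.log Θ.det - Real.log (blockDiagPart c Θ).det := by
  have hentry : ∀ i j, 0 ≤ S i j * (Θ j i - blockDiagPart c Θ j i) +
      lam * ((if i ≠ j then |Θ i j| else 0) - if i ≠ j then |blockDiagPart c Θ i j| else 0) := by
    intro i j
    by_cases hij : c i = c j
    · simp [hij]
    · have hne : i ≠ j := fun h => hij (congrArg c h)
      have hsym : Θ j i = Θ i j := hΘ.apply i j
      simp only [blockDiagPart_apply, if_neg hij, if_neg (Ne.symm hij), if_pos hne, abs_zero,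
        sub_zero, hsym]
      linarith [neg_abs_le (S i j * Θ i j), abs_mul (S i j) (Θ i j),
        mul_le_mul_of_nonneg_right (hsmall i j hij) (abs_nonneg (Θ i j))]
  have hsum := Finset.sum_nonneg fun i (_ : i ∈ Finset.univ) =>
    Finset.sum_nonneg fun j (_ : j ∈ Finset.univ) => hentry i j
  simp only [mul_sub, Finset.sum_add_distrib, Finset.sum_sub_distrib] at hsum
  simp only [glassoObj, trace, diag_apply, mul_apply, Finset.mul_sum]
  linarith

theorem glasso_block_diagonal_of_small_between_cluster_entries_general
    {p K : ℕ}
    (S : Matrix (Fin p) (Fin p) ℝ)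
    (lam : ℝ)
    (c : Fin p → Fin K)
    (hsmall : ∀ j j' : Fin p, c j ≠ c j' → |S j j'| ≤ lam) :
    ∀ Θhat : Matrix (Fin p) (Fin p) ℝ, IsGlassoSolution S lam Θhat →
      ∀ j j' : Fin p, c j ≠ c j' → Θhat j j' = 0 := by
  rintro Θhat ⟨hsymm, hpd, hmax⟩
  suffices hD : blockDiagPart c Θhat = Θhat from hD ▸ isBlockDiagonal_blockDiagPart Θhat
  have hDpd : (blockDiagPart c Θhat).PosDef := hpd.blockDiagPart
  by_contra hne
  have htrace : (Θhat * (blockDiagPart c Θhat)⁻¹).trace = Fintype.card (Fin p) := by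
    rw [← (isBlockDiagonal_blockDiagPart Θhat).inv.trace_blockDiagPart_mul,
      mul_nonsing_inv _ hDpd.det_pos.ne'.isUnit, trace_one]
  have hlogdet := hpd.log_det_lt_log_det_add_trace_mul_inv_sub_card hDpd (Ne.symm hne)
  have hobj := glassoObj_sub_glassoObj_blockDiagPart_le hsmall hsymm
  have hopt := hmax _ hsymm.blockDiagPart hDpd
  linarith

/-- if all between-cluster entries of S are ≤ λ in absolute value, then every
graphical lasso solution is block diagonal with respect to the partition. -/
theorem glasso_block_diagonal_of_small_between_cluster_entries
    {p K : ℕ} (hp : 1 ≤ p)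
    (S : Matrix (Fin p) (Fin p) ℝ) (hSsymm : S.IsSymm) (hSpsd : S.PosSemidef)
    (lam : ℝ) (hlam : 0 < lam)
    (c : Fin p → Fin K) (hc : Function.Surjective c)
    (hsmall : ∀ j j' : Fin p, c j ≠ c j' → |S j j'| ≤ lam) :
    ∀ Θhat : Matrix (Fin p) (Fin p) ℝ, IsGlassoSolution S lam Θhat →
      ∀ j j' : Fin p, c j ≠ c j' → Θhat j j' = 0 :=
  glasso_block_diagonal_of_small_between_cluster_entries_general S lam c hsmall
end

section
/- Let p ≥ 1, let S be a p×p real symmetric positive semidefinite matrix, let λ > 0, let c : {1,…,p} → {1,…,K} be a partition of the indices, and suppose that |S_{j j'}| ≤ λ for all pairs j, j' with c(j) ≠ c(j'). If Θ̂ is a graphical lasso solution for S with tuning parameter λ, then for each k ∈ {1,…,K} the principal submatrix of Θ̂ indexed by c⁻¹(k) is a graphical lasso solution, with the same tuning parameter λ, for the principal submatrix of S indexed by c⁻¹(k). -/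
/-!
Reorder the indices so that the cluster `c⁻¹(k)` comes first and write `Θ = [[A, B], [Bᵀ, D]]`.
Replacing `Θ` by `diag(A, D)` does not decrease the objective: Fischer's inequality
`det Θ ≤ det A · det D` (Schur complement plus monotonicity of `det` on positive semidefinite
matrices) raises the log-determinant, and every dropped off-block summand
`S_{ab} Θ_{ba} + λ |Θ_{ab}|` is nonnegative because `|S_{ab}| ≤ λ`. On block-diagonal matrices the
objective splits into the two block objectives, so comparing `Θ̂` with `diag(X, D̂)` gives
`f₁(X) ≤ f₁(Â)` for every admissible `X`.
-/

open Matrix BigOperators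

namespace Matrix

variable {n m m' : Type*} [Fintype n] [DecidableEq n] [Fintype m] [DecidableEq m]
  [Fintype m'] [DecidableEq m']

open scoped MatrixOrder in
theorem PosSemidef.one_le_det_one_add {Q : Matrix n n ℝ} (hQ : Q.PosSemidef) :
    1 ≤ (1 + Q).det := by
  have hH : (1 + Q).IsHermitian := isHermitian_one.add hQ.1
  rw [hH.det_eq_prod_eigenvalues]
  refine Finset.one_le_prod fun i _ => ?_
  have hmem : hH.eigenvalues i ∈ spectrum ℝ (algebraMap ℝ _ 1 + Q) := by
    simpa using hH.eigenvalues_mem_spectrum_real i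
  rw [← spectrum.singleton_add_eq] at hmem
  obtain ⟨_, rfl, μ, hμ, hsum⟩ := hmem
  rw [← hsum]
  simpa using spectrum_nonneg_of_nonneg hQ.nonneg hμ

open scoped MatrixOrder in
theorem PosSemidef.det_le_det_add {X P : Matrix n n ℝ} (hX : X.PosSemidef) (hP : P.PosSemidef) :
    X.det ≤ (X + P).det := by
  rcases hX.det_nonneg.eq_or_lt with hdet | hdet
  · exact hdet ▸ (hX.add hP).det_nonneg
  set R := CFC.sqrt X
  have hRR : R * R = X := CFC.sqrt_mul_sqrt_self X hX.nonneg
  have hRdet : R.det * R.det = X.det := by rw [← det_mul, hRR]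
  have hR : IsUnit R.det := isUnit_iff_ne_zero.2 fun h => by simp [h] at hRdet; linarith
  have hRinv : (R⁻¹)ᴴ = R⁻¹ := (CFC.sqrt_nonneg X).posSemidef.1.inv
  have hQ : (R⁻¹ * P * R⁻¹).PosSemidef := by
    simpa only [hRinv] using hP.conjTranspose_mul_mul_same R⁻¹
  have hsplit : X + P = R * (1 + R⁻¹ * P * R⁻¹) * R := by
    rw [mul_add, add_mul, mul_one, hRR, Matrix.mul_assoc, Matrix.mul_assoc, nonsing_inv_mul R hR,
      Matrix.mul_one, ← Matrix.mul_assoc, mul_nonsing_inv R hR, Matrix.one_mul]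
  rw [hsplit, det_mul, det_mul, ← hRdet]
  nlinarith [hQ.one_le_det_one_add, mul_self_nonneg R.det]

theorem PosDef.det_le_det_toBlocks₁₁_mul_det_toBlocks₂₂ {M : Matrix (m ⊕ m') (m ⊕ m') ℝ}
    (hM : M.PosDef) : M.det ≤ M.toBlocks₁₁.det * M.toBlocks₂₂.det := by
  set A := M.toBlocks₁₁
  set B := M.toBlocks₁₂
  set D := M.toBlocks₂₂
  have hA : A.PosDef := hM.submatrix Sum.inl_injective
  have : Invertible A := A.invertibleOfIsUnitDet (isUnit_iff_ne_zero.2 hA.det_pos.ne')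
  have hMeq : M = fromBlocks A B Bᴴ D := by
    have hH := hM.1
    rw [← fromBlocks_toBlocks M, isHermitian_fromBlocks_iff] at hH
    rw [hH.2.1, fromBlocks_toBlocks]
  have hschur : (D - Bᴴ * A⁻¹ * B).PosSemidef := by
    rw [← PosDef.fromBlocks₁₁ B D hA, ← hMeq]
    exact hM.posSemidef
  have hcorr : (Bᴴ * A⁻¹ * B).PosSemidef := hA.inv.posSemidef.conjTranspose_mul_mul_same B
  calc M.det = A.det * (D - Bᴴ * A⁻¹ * B).det := by
        rw [hMeq, det_fromBlocks₁₁, invOf_eq_nonsing_inv]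
    _ ≤ A.det * D.det := by
        gcongr
        · exact hA.det_pos.le
        · simpa using hschur.det_le_det_add hcorr

theorem PosDef.fromBlocks_zero {A : Matrix m m ℝ} {D : Matrix m' m' ℝ} (hA : A.PosDef)
    (hD : D.PosDef) : (fromBlocks A 0 0 D).PosDef := by
  have : Invertible A := A.invertibleOfIsUnitDet (isUnit_iff_ne_zero.2 hA.det_pos.ne')
  have hpsd : (fromBlocks A 0 0 D).PosSemidef := by
    simpa using (PosDef.fromBlocks₁₁ (0 : Matrix m m' ℝ) D hA).2 (by simpa using hD.posSemidef)
  rw [hpsd.posDef_iff_det_ne_zero, det_fromBlocks_zero₂₁]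
  exact mul_ne_zero hA.det_pos.ne' hD.det_pos.ne'

end Matrix

section Glasso

variable {n m m' : Type*} [Fintype n] [DecidableEq n] [Fintype m] [DecidableEq m]
  [Fintype m'] [DecidableEq m']

theorem glassoObj_eq_log_det_sub_sum (S : Matrix n n ℝ) (lam : ℝ) (Θ : Matrix n n ℝ) :
    glassoObj S lam Θ = Real.log Θ.det -
      ∑ a, ∑ b, (S a b * Θ b a + lam * if a ≠ b then |Θ a b| else 0) := by
  simp only [glassoObj, trace, diag, mul_apply, Finset.sum_add_distrib, Finset.mul_sum]
  ring

theorem glassoObj_submatrix_equiv (e : m ≃ n) (S : Matrix n n ℝ) (lam : ℝ) (Θ : Matrix n n ℝ) :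
    glassoObj (S.submatrix e e) lam (Θ.submatrix e e) = glassoObj S lam Θ := by
  rw [glassoObj_eq_log_det_sub_sum, glassoObj_eq_log_det_sub_sum, det_submatrix_equiv_self]
  congr 1
  refine Fintype.sum_equiv e _ _ fun a => Fintype.sum_equiv e _ _ fun b => ?_
  simp only [submatrix_apply, e.injective.ne_iff]

theorem IsGlassoSolution.submatrix_equiv {S Θ : Matrix n n ℝ} {lam : ℝ}
    (h : IsGlassoSolution S lam Θ) (e : m ≃ n) :
    IsGlassoSolution (S.submatrix e e) lam (Θ.submatrix e e) := by
  obtain ⟨hsymm, hpd, hopt⟩ := h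
  refine ⟨hsymm.submatrix e, hpd.submatrix e.injective, fun X hXsymm hXpd => ?_⟩
  have hX : (X.submatrix e.symm e.symm).submatrix e e = X := by simp
  rw [← hX, glassoObj_submatrix_equiv, glassoObj_submatrix_equiv]
  exact hopt _ (hXsymm.submatrix e.symm) (hXpd.submatrix e.symm.injective)

theorem glassoObj_fromBlocks_zero (S : Matrix (m ⊕ m') (m ⊕ m') ℝ) (lam : ℝ)
    {X : Matrix m m ℝ} {Y : Matrix m' m' ℝ} (hX : X.det ≠ 0) (hY : Y.det ≠ 0) :
    glassoObj S lam (fromBlocks X 0 0 Y) =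
      glassoObj S.toBlocks₁₁ lam X + glassoObj S.toBlocks₂₂ lam Y := by
  simp only [glassoObj_eq_log_det_sub_sum, det_fromBlocks_zero₂₁, Real.log_mul hX hY,
    Fintype.sum_sum_type, fromBlocks_apply₁₁, fromBlocks_apply₁₂, fromBlocks_apply₂₁,
    fromBlocks_apply₂₂, toBlocks₁₁, toBlocks₂₂, of_apply, ne_eq, Sum.inl.injEq, Sum.inr.injEq,
    Matrix.zero_apply, abs_zero, mul_zero, reduceCtorEq, not_false_eq_true, ite_true, add_zero,
    Finset.sum_const_zero, Finset.sum_add_distrib]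
  ring

theorem glassoObj_le_glassoObj_fromBlocks_toBlocks {S : Matrix (m ⊕ m') (m ⊕ m') ℝ} {lam : ℝ}
    (hS₁₂ : ∀ i j, |S.toBlocks₁₂ i j| ≤ lam) (hS₂₁ : ∀ i j, |S.toBlocks₂₁ i j| ≤ lam)
    {Θ : Matrix (m ⊕ m') (m ⊕ m') ℝ} (hsymm : Θ.IsSymm) (hpd : Θ.PosDef) :
    glassoObj S lam Θ ≤ glassoObj S lam (fromBlocks Θ.toBlocks₁₁ 0 0 Θ.toBlocks₂₂) := by
  set T := fromBlocks Θ.toBlocks₁₁ 0 0 Θ.toBlocks₂₂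
  rw [glassoObj_eq_log_det_sub_sum, glassoObj_eq_log_det_sub_sum]
  have hlog : Real.log Θ.det ≤ Real.log T.det := by
    rw [det_fromBlocks_zero₂₁]
    exact Real.log_le_log hpd.det_pos hpd.det_le_det_toBlocks₁₁_mul_det_toBlocks₂₂
  have hcross : ∀ (s θ : ℝ), |s| ≤ lam → 0 ≤ s * θ + lam * |θ| := fun s θ hs => by
    have := abs_mul s θ ▸ neg_abs_le (s * θ)
    nlinarith [mul_le_mul_of_nonneg_right hs (abs_nonneg θ)]
  have hterm : ∀ a b, (S a b * T b a + lam * if a ≠ b then |T a b| else 0) ≤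
      S a b * Θ b a + lam * if a ≠ b then |Θ a b| else 0 := by
    rintro (i | i) (j | j)
    · simp [T, toBlocks₁₁]
    · simpa [T, toBlocks₁₂, toBlocks₂₁, hsymm.apply] using
        hcross _ (Θ (Sum.inl i) (Sum.inr j)) (hS₁₂ i j)
    · simpa [T, toBlocks₁₂, toBlocks₂₁, hsymm.apply] using
        hcross _ (Θ (Sum.inr i) (Sum.inl j)) (hS₂₁ i j)
    · simp [T, toBlocks₂₂]
  exact sub_le_sub hlog (Finset.sum_le_sum fun a _ => Finset.sum_le_sum fun b _ => hterm a b)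

theorem IsGlassoSolution.toBlocks₁₁ {S Θ : Matrix (m ⊕ m') (m ⊕ m') ℝ} {lam : ℝ}
    (hS₁₂ : ∀ i j, |S.toBlocks₁₂ i j| ≤ lam) (hS₂₁ : ∀ i j, |S.toBlocks₂₁ i j| ≤ lam)
    (h : IsGlassoSolution S lam Θ) :
    IsGlassoSolution S.toBlocks₁₁ lam Θ.toBlocks₁₁ := by
  obtain ⟨hsymm, hpd, hopt⟩ := h
  have hA : Θ.toBlocks₁₁.PosDef := hpd.submatrix Sum.inl_injective
  have hD : Θ.toBlocks₂₂.PosDef := hpd.submatrix Sum.inr_injective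
  refine ⟨hsymm.submatrix Sum.inl, hA, fun X hXsymm hXpd => ?_⟩
  have hle := hopt (fromBlocks X 0 0 Θ.toBlocks₂₂)
    (hXsymm.fromBlocks (by simp) (hsymm.submatrix Sum.inr)) (hXpd.fromBlocks_zero hD)
  have hblock := glassoObj_le_glassoObj_fromBlocks_toBlocks hS₁₂ hS₂₁ hsymm hpd
  rw [glassoObj_fromBlocks_zero _ _ hXpd.det_pos.ne' hD.det_pos.ne'] at hle
  rw [glassoObj_fromBlocks_zero _ _ hA.det_pos.ne' hD.det_pos.ne'] at hblock
  linarith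

end Glasso

theorem glasso_principal_submatrix_is_glasso_solution_general
    {p K : ℕ} (S : Matrix (Fin p) (Fin p) ℝ) (lam : ℝ) (c : Fin p → Fin K)
    (hsmall : ∀ j j' : Fin p, c j ≠ c j' → |S j j'| ≤ lam)
    (Θhat : Matrix (Fin p) (Fin p) ℝ) (hΘhat : IsGlassoSolution S lam Θhat)
    (k : Fin K) :
    IsGlassoSolution
      (S.submatrix (Subtype.val : {j : Fin p // c j = k} → Fin p) Subtype.val)
      lam
      (Θhat.submatrix (Subtype.val : {j : Fin p // c j = k} → Fin p) Subtype.val) := by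
  have hne : ∀ (i : {j // c j = k}) (j : {j // ¬c j = k}), c i ≠ c j :=
    fun i j h => j.2 (h.symm.trans i.2)
  exact (hΘhat.submatrix_equiv (Equiv.sumCompl fun j => c j = k)).toBlocks₁₁
    (fun i j => hsmall _ _ (hne i j)) (fun j i => hsmall _ _ (hne i j).symm)

/-- if all between-cluster entries of S are ≤ λ in absolute value, then the
principal submatrix of a graphical lasso solution indexed by each cluster c⁻¹(k) is itself a
graphical lasso solution, with the same tuning parameter λ, for the corresponding principal
submatrix of S. -/
theorem glasso_principal_submatrix_is_glasso_solution
    {p K : ℕ} (hp : 1 ≤ p)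
    (S : Matrix (Fin p) (Fin p) ℝ) (hSsymm : S.IsSymm) (hSpsd : S.PosSemidef)
    (lam : ℝ) (hlam : 0 < lam)
    (c : Fin p → Fin K) (hc : Function.Surjective c)
    (hsmall : ∀ j j' : Fin p, c j ≠ c j' → |S j j'| ≤ lam)
    (Θhat : Matrix (Fin p) (Fin p) ℝ) (hΘhat : IsGlassoSolution S lam Θhat)
    (k : Fin K) :
    IsGlassoSolution
      (S.submatrix (Subtype.val : {j : Fin p // c j = k} → Fin p) Subtype.val)
      lam
      (Θhat.submatrix (Subtype.val : {j : Fin p // c j = k} → Fin p) Subtype.val) :=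
  glasso_principal_submatrix_is_glasso_solution_general S lam c hsmall Θhat hΘhat k
end

section
/- Let p ≥ 1, let S be a p×p real symmetric positive semidefinite matrix, let λ > 0, let c : {1,…,p} → {1,…,K} be a partition of the indices, and let Θ̂ be a graphical lasso solution for S with tuning parameter λ. If Θ̂_{j j'} = 0 for all pairs j, j' with c(j) ≠ c(j') (i.e., Θ̂ is block diagonal with respect to c), then |S_{j j'}| ≤ λ for all pairs j, j' with c(j) ≠ c(j'). -/
open Matrix BigOperators

open Filter Topology Set

theorem IsLocalMaxOn.hasDerivAt_nonpos_of_Ici {f : ℝ → ℝ} {f' a : ℝ}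
    (h : IsLocalMaxOn f (Ici a) a) (hf : HasDerivAt f f' a) : f' ≤ 0 := by
  simpa using h.hasFDerivWithinAt_nonpos hf.hasFDerivAt.hasFDerivWithinAt
    (mem_posTangentConeAt_of_segment_subset (y := 1)
      (by simp [segment_eq_Icc, Icc_subset_Ici_self]))

variable {n : Type*} [Fintype n]

/-- Compactness of the unit sphere: the quadratic form of `A + t • E` stays positive on it for
small `t`, and positivity on the sphere gives positivity everywhere by homogeneity. -/
theorem Matrix.PosDef.eventually_posDef_add_smul {A E : Matrix n n ℝ} (hA : A.PosDef)
    (hE : E.IsHermitian) : ∀ᶠ t in 𝓝 (0 : ℝ), (A + t • E).PosDef := by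
  have hq : Continuous fun p : ℝ × (n → ℝ) => p.2 ⬝ᵥ (A + p.1 • E) *ᵥ p.2 := by
    simp only [dotProduct, mulVec, add_apply, smul_apply, smul_eq_mul]
    fun_prop
  have hsphere : ∀ᶠ t in 𝓝 (0 : ℝ), ∀ x ∈ Metric.sphere (0 : n → ℝ) 1,
      0 < x ⬝ᵥ (A + t • E) *ᵥ x := by
    refine (isCompact_sphere _ _).eventually_forall_of_forall_eventually fun x hx => ?_
    have hx0 : x ≠ 0 := by rintro rfl; simp at hx
    refine hq.continuousAt.eventually (lt_mem_nhds ?_)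
    simpa using hA.dotProduct_mulVec_pos hx0
  filter_upwards [hsphere] with t ht
  refine PosDef.of_dotProduct_mulVec_pos (hA.isHermitian.add (hE.smul (.all t))) fun x hx => ?_
  have hnorm : 0 < ‖x‖ := norm_pos_iff.mpr hx
  have hunit := ht (‖x‖⁻¹ • x) (by simp [norm_smul, hnorm.ne'])
  rw [mulVec_smul, dotProduct_smul, smul_dotProduct, smul_eq_mul, smul_eq_mul, ← mul_assoc]
    at hunit
  simpa using pos_of_mul_pos_right hunit (by positivity)

variable [DecidableEq n]

namespace Matrix

theorem hasDerivAt_det_one_add_smul {𝕜 : Type*} [NontriviallyNormedField 𝕜] (M : Matrix n n 𝕜) :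
    HasDerivAt (fun t : 𝕜 => (1 + t • M).det) M.trace 0 := by
  have h := (det (1 + (Polynomial.X : Polynomial 𝕜) • M.map Polynomial.C)).hasDerivAt 0
  rw [derivative_det_one_add_X_smul] at h
  refine h.congr_of_eventuallyEq (Eventually.of_forall fun t => ?_)
  dsimp only
  rw [det_one_add_X_smul M, det_one_add_smul t M]
  simp

theorem hasDerivAt_log_det_add_smul {A : Matrix n n ℝ} (hA : A.det ≠ 0) (E : Matrix n n ℝ) :
    HasDerivAt (fun t : ℝ => Real.log (A + t • E).det) (A⁻¹ * E).trace 0 := by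
  have hfactor : ∀ t : ℝ, (A + t • E).det = A.det * (1 + t • (A⁻¹ * E)).det := fun t => by
    rw [← det_mul, Matrix.mul_add, Matrix.mul_one, Matrix.mul_smul, ← Matrix.mul_assoc,
      mul_nonsing_inv A (isUnit_iff_ne_zero.mpr hA), Matrix.one_mul]
  have h := ((hasDerivAt_det_one_add_smul (A⁻¹ * E)).const_mul A.det).log (by simpa using hA)
  simp only [hfactor]
  convert h using 1
  simp [hA]

/-- A matrix that is block diagonal for `c` is block triangular for both `c` and its order dual. -/
theorem inv_apply_eq_zero_of_blockDiagonal {α R : Type*} [LinearOrder α] [CommRing R]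
    (c : n → α) {A : Matrix n n R} [Invertible A]
    (hA : ∀ i j, c i ≠ c j → A i j = 0) {i j : n} (hij : c i ≠ c j) : A⁻¹ i j = 0 := by
  rcases hij.lt_or_gt with h | h
  · exact blockTriangular_inv_of_blockTriangular (M := A) (b := OrderDual.toDual ∘ c)
      (fun _ _ hlt => hA _ _ hlt.ne') h
  · exact blockTriangular_inv_of_blockTriangular (M := A) (b := c) (fun _ _ hlt => hA _ _ hlt.ne') h

end Matrix

def offDiagAbsSum (Θ : Matrix n n ℝ) : ℝ := ∑ j : n, ∑ j' : n, (if j ≠ j' then |Θ j j'| else 0)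

theorem glassoObj_eq (S : Matrix n n ℝ) (lam : ℝ) (Θ : Matrix n n ℝ) :
    glassoObj S lam Θ = Real.log Θ.det - (S * Θ).trace - lam * offDiagAbsSum Θ := rfl

theorem offDiagAbsSum_add_single (M : Matrix n n ℝ) {a b : n} (hab : a ≠ b) (x : ℝ) :
    offDiagAbsSum (M + single a b x) = offDiagAbsSum M + (|M a b + x| - |M a b|) := by
  have hentry : ∀ i k, (if i ≠ k then |(M + single a b x) i k| else 0) =
      (if i ≠ k then |M i k| else 0) + if i = a ∧ k = b then |M a b + x| - |M a b| else 0 := by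
    intro i k
    by_cases h : i = a ∧ k = b
    · obtain ⟨rfl, rfl⟩ := h
      simp [hab]
    · have hzero : single a b x i k = 0 := by
        rw [single_apply, if_neg fun h' => h ⟨h'.1.symm, h'.2.symm⟩]
      simp [hzero, h]
  simp only [offDiagAbsSum, hentry, Finset.sum_add_distrib, ite_and]
  simp

theorem IsGlassoSolution.mul_inv_add_sub_le {S Θ : Matrix n n ℝ} {lam : ℝ}
    (hΘ : IsGlassoSolution S lam Θ) {j k : n} (hjk : j ≠ k) (hzero : Θ j k = 0) {σ : ℝ}
    (hσ : |σ| = 1) : σ * (Θ⁻¹ j k + Θ⁻¹ k j - (S j k + S k j)) ≤ 2 * lam := by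
  obtain ⟨hsymm, hpd, hmax⟩ := hΘ
  set E : Matrix n n ℝ := single j k σ + single k j σ with hE
  have hEsymm : E.IsSymm := by
    simp only [IsSymm, hE, transpose_add, transpose_single, add_comm]
  -- agrees with the objective along `Θ + t • E` for `t ≥ 0`, and is differentiable at `0`
  set g : ℝ → ℝ := fun t =>
    Real.log (Θ + t • E).det - (S * (Θ + t • E)).trace - lam * (offDiagAbsSum Θ + 2 * t)
  have hderiv : HasDerivAt g ((Θ⁻¹ * E).trace - (S * E).trace - lam * 2) 0 := by
    have hlin : HasDerivAt (fun t : ℝ => (S * Θ).trace + t * (S * E).trace) (S * E).trace 0 := by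
      simpa using ((hasDerivAt_id (0 : ℝ)).mul_const (S * E).trace).const_add (S * Θ).trace
    have hpen : HasDerivAt (fun t : ℝ => lam * (offDiagAbsSum Θ + 2 * t)) (lam * 2) 0 := by
      simpa using (((hasDerivAt_id (0 : ℝ)).const_mul 2).const_add (offDiagAbsSum Θ)).const_mul lam
    refine (((hasDerivAt_log_det_add_smul hpd.det_pos.ne' E).sub hlin).sub hpen)
      |>.congr_of_eventuallyEq (Eventually.of_forall fun t => ?_)
    simp [g, Matrix.mul_add, trace_add, mul_comm]
  have hmaxOn : IsLocalMaxOn g (Ici 0) 0 := by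
    filter_upwards [nhdsWithin_le_nhds
        (hpd.eventually_posDef_add_smul (isHermitian_iff_isSymm.mpr hEsymm)),
      self_mem_nhdsWithin] with t hpdt (ht : 0 ≤ t)
    have hpen : offDiagAbsSum (Θ + t • E) = offDiagAbsSum Θ + 2 * t := by
      have hzero' : Θ k j = 0 := by rw [← hzero]; exact hsymm.apply j k
      rw [hE, smul_add, smul_single, smul_single, ← add_assoc,
        offDiagAbsSum_add_single _ hjk.symm, offDiagAbsSum_add_single _ hjk]
      simp [single_apply_of_row_ne hjk, hzero, hzero', abs_mul, hσ, abs_of_nonneg ht]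
      ring
    have hle := hmax _ (hsymm.add (hEsymm.smul t)) hpdt
    rw [glassoObj_eq, glassoObj_eq, hpen] at hle
    simpa [g] using hle
  have hslope := hmaxOn.hasDerivAt_nonpos_of_Ici hderiv
  simp [hE, Matrix.mul_add, trace_add, trace_mul_single] at hslope
  linarith

theorem IsGlassoSolution.abs_inv_add_sub_le {S Θ : Matrix n n ℝ} {lam : ℝ}
    (hΘ : IsGlassoSolution S lam Θ) {j k : n} (hjk : j ≠ k) (hzero : Θ j k = 0) :
    |Θ⁻¹ j k + Θ⁻¹ k j - (S j k + S k j)| ≤ 2 * lam := by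
  have hplus := hΘ.mul_inv_add_sub_le hjk hzero (σ := 1) (by simp)
  have hminus := hΘ.mul_inv_add_sub_le hjk hzero (σ := -1) (by simp)
  exact abs_le.mpr ⟨by linarith, by linarith⟩

theorem between_cluster_entries_small_of_glasso_block_diagonal_general
    {p K : ℕ}
    (S : Matrix (Fin p) (Fin p) ℝ) (hSsymm : S.IsSymm)
    (lam : ℝ)
    (c : Fin p → Fin K)
    (Θhat : Matrix (Fin p) (Fin p) ℝ) (hΘhat : IsGlassoSolution S lam Θhat)
    (hblock : ∀ j j' : Fin p, c j ≠ c j' → Θhat j j' = 0) :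
    ∀ j j' : Fin p, c j ≠ c j' → |S j j'| ≤ lam := by
  intro j j' hjj'
  have hne : j ≠ j' := fun h => hjj' (congrArg c h)
  let := hΘhat.2.1.isUnit.invertible
  have hstat := hΘhat.abs_inv_add_sub_le hne (hblock j j' hjj')
  rw [inv_apply_eq_zero_of_blockDiagonal c hblock hjj',
    inv_apply_eq_zero_of_blockDiagonal c hblock hjj'.symm, hSsymm.apply j j'] at hstat
  have htwo : |S j j' + S j j'| = 2 * |S j j'| := by rw [← two_mul, abs_mul, abs_two]
  rw [zero_add, zero_sub, abs_neg, htwo] at hstat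
  linarith

/-- if a graphical lasso solution is block diagonal with respect to a partition c,
then all between-cluster entries of S are at most λ in absolute value. -/
theorem between_cluster_entries_small_of_glasso_block_diagonal
    {p K : ℕ} (hp : 1 ≤ p)
    (S : Matrix (Fin p) (Fin p) ℝ) (hSsymm : S.IsSymm) (hSpsd : S.PosSemidef)
    (lam : ℝ) (hlam : 0 < lam)
    (c : Fin p → Fin K) (hc : Function.Surjective c)
    (Θhat : Matrix (Fin p) (Fin p) ℝ) (hΘhat : IsGlassoSolution S lam Θhat)
    (hblock : ∀ j j' : Fin p, c j ≠ c j' → Θhat j j' = 0) :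
    ∀ j j' : Fin p, c j ≠ c j' → |S j j'| ≤ lam :=
  between_cluster_entries_small_of_glasso_block_diagonal_general S hSsymm lam c Θhat hΘhat hblock
end

section
/- Let p ≥ 1, let Σ be a p×p real symmetric matrix, let c : {1,…,p} → {1,…,K} be a partition of the indices, and let a > 0. Suppose Σ is block diagonal with respect to c (Σ_{i j} = 0 whenever c(i) ≠ c(j)) and that |Σ_{i j}| ≥ a for all pairs i, j with c(i) = c(j). Let S̃ be any p×p matrix with nonnegative entries satisfying max_{i,j} |S̃_{i j} − |Σ_{i j}|| < a/2. Then the connected components of the simple graph on {1,…,p} with an edge between distinct i and j if and only if S̃_{i j} > a/2 are exactly the fibers c⁻¹(1), …, c⁻¹(K); that is, distinct i and j lie in the same connected component of this graph if and only if c(i) = c(j). -/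
namespace SimpleGraph

variable {V β : Type*}

theorem Reachable.apply_eq_of_adj {G : SimpleGraph V} {f : V → β}
    (hf : ∀ u v, G.Adj u v → f u = f v) {u v : V} (h : G.Reachable u v) : f u = f v := by
  rw [reachable_iff_reflTransGen] at h
  simpa only [Relation.reflTransGen_eq_self] using h.lift f hf

theorem fromRel_reachable_iff_of_rel_iff {r : V → V → Prop} {f : V → β}
    (hr : ∀ u v, r u v ↔ f u = f v) (u v : V) :
    (fromRel r).Reachable u v ↔ f u = f v := by
  refine ⟨Reachable.apply_eq_of_adj fun x y hxy => ?_, fun huv => ?_⟩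
  · rcases (fromRel_adj r x y).1 hxy |>.2 with hxy | hyx
    · exact (hr x y).1 hxy
    · exact ((hr y x).1 hyx).symm
  · rcases eq_or_ne u v with rfl | hne
    · rfl
    · exact Adj.reachable ((fromRel_adj r u v).2 ⟨hne, Or.inl ((hr u v).2 huv)⟩)

end SimpleGraph

theorem half_lt_of_abs_sub_abs_lt_half {a s σ : ℝ} (hσ : a ≤ |σ|) (hs : abs (s - |σ|) < a / 2) :
    a / 2 < s := by
  linarith [(abs_sub_lt_iff.mp hs).2]

theorem half_lt_iff_same_block {ι κ : Type*} {a : ℝ} {Sig Stilde : ι → ι → ℝ}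
    {c : ι → κ} (hblock : ∀ i j, c i ≠ c j → Sig i j = 0)
    (hsignal : ∀ i j, c i = c j → a ≤ |Sig i j|)
    (hdev : ∀ i j, abs (Stilde i j - |Sig i j|) < a / 2) (i j : ι) :
    a / 2 < Stilde i j ↔ c i = c j := by
  refine ⟨fun hlt => ?_, fun hc => half_lt_of_abs_sub_abs_lt_half (hsignal i j hc) (hdev i j)⟩
  by_contra hne
  have hsmall := hdev i j
  rw [hblock i j hne, abs_zero, sub_zero] at hsmall
  exact lt_asymm hlt (lt_of_abs_lt hsmall)

theorem threshold_graph_recovers_blocks_general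
    {p K : ℕ}
    (Sig : Matrix (Fin p) (Fin p) ℝ)
    (c : Fin p → Fin K)
    (a : ℝ)
    (hblock : ∀ i j : Fin p, c i ≠ c j → Sig i j = 0)
    (hsignal : ∀ i j : Fin p, c i = c j → a ≤ |Sig i j|)
    (Stilde : Matrix (Fin p) (Fin p) ℝ)
    (hdev : ∀ i j : Fin p, abs (Stilde i j - |Sig i j|) < a / 2) :
    ∀ i j : Fin p,
      (SimpleGraph.fromRel (fun i j : Fin p => a / 2 < Stilde i j)).Reachable i j ↔
        c i = c j :=
  SimpleGraph.fromRel_reachable_iff_of_rel_iff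
    (half_lt_iff_same_block hblock hsignal hdev)

/-- if Σ is block diagonal with respect to a partition c, with all within-block
entries at least a > 0 in absolute value, and S̃ is a nonnegative matrix whose entries deviate
from |Σ| by strictly less than a/2, then the connected components of the graph obtained by
thresholding S̃ at level a/2 are exactly the fibers of c. -/
theorem threshold_graph_recovers_blocks
    {p K : ℕ} (hp : 1 ≤ p)
    (Sig : Matrix (Fin p) (Fin p) ℝ)
    (c : Fin p → Fin K) (hc : Function.Surjective c)
    (a : ℝ) (ha : 0 < a)
    (hblock : ∀ i j : Fin p, c i ≠ c j → Sig i j = 0)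
    (hsignal : ∀ i j : Fin p, c i = c j → a ≤ |Sig i j|)
    (Stilde : Matrix (Fin p) (Fin p) ℝ)
    (hnonneg : ∀ i j : Fin p, 0 ≤ Stilde i j)
    (hdev : ∀ i j : Fin p, abs (Stilde i j - |Sig i j|) < a / 2) :
    ∀ i j : Fin p,
      (SimpleGraph.fromRel (fun i j : Fin p => a / 2 < Stilde i j)).Reachable i j ↔
        c i = c j :=
  threshold_graph_recovers_blocks_general Sig c a hblock hsignal Stilde hdev
end

section
/- Let (Ω, μ) be a probability space, let p ≥ 2 and n ≥ 1 be integers, let Σ be a p×p real symmetric matrix, let c : {1,…,p} → {1,…,K} be a partition of the indices, and let S : Ω → (p×p real matrices) be a measurable random matrix. Suppose Σ is block diagonal with respect to c, and that there exists t > 0 with |Σ_{i j}| ≥ 2 t √(log p / n) for all pairs i, j with c(i) = c(j). Suppose further there exist constants c₁ > 0 and c₂ > 0 such that for every pair (i, j) and every δ > 0, μ({ω : |S(ω)_{i j} − Σ_{i j}| ≥ δ}) ≤ c₁ · exp(−c₂ n δ²). For ω ∈ Ω, let G(ω) be the simple graph on {1,…,p} with an edge between distinct i and j if and only if |S(ω)_{i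 j}| > t √(log p / n). Then μ({ω : the connected components of G(ω) are not exactly the fibers c⁻¹(1), …, c⁻¹(K)}) ≤ c₁ · p^{2 − c₂ t²}. -/
open MeasureTheory

/-!
On the event that every entry of `S` is within `δ = t √(log p / n)` of the corresponding entry
of `Σ`, thresholding at `δ` keeps exactly the within-block pairs: off-block entries of `S` are
below `δ` because those of `Σ` vanish, and within-block entries exceed `δ` because those of `Σ`
are at least `2δ`. The components of the threshold graph are then the blocks. The complementary
event is covered by the `p²` events `|S_ij - Σ_ij| ≥ δ`, each of probability at most
`c₁ exp(-c₂ n δ²) = c₁ p^{-c₂ t²}`.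
-/

theorem SimpleGraph.reachable_iff_eq_of_adj_iff {α β : Type*} {G : SimpleGraph α} {c : α → β}
    (hadj : ∀ a b, G.Adj a b ↔ a ≠ b ∧ c a = c b) (i j : α) :
    G.Reachable i j ↔ c i = c j := by
  constructor
  · rintro ⟨w⟩
    induction w with
    | nil => rfl
    | cons hab _ ih => exact ((hadj _ _).1 hab).2.trans ih
  · intro hij
    by_cases heq : i = j
    · exact heq ▸ SimpleGraph.Reachable.refl i
    · exact ((hadj i j).2 ⟨heq, hij⟩).reachable

section Thresholding

variable {ι κ : Type*} {Sig S : Matrix ι ι ℝ} {c : ι → κ} {δ : ℝ}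

theorem lt_abs_iff_of_abs_sub_lt (hblock : ∀ i j, c i ≠ c j → Sig i j = 0)
    (hsignal : ∀ i j, c i = c j → 2 * δ ≤ |Sig i j|) (hclose : ∀ i j, |S i j - Sig i j| < δ)
    (i j : ι) : δ < |S i j| ↔ c i = c j := by
  have hdiff := hclose i j
  constructor
  · intro hlarge
    by_contra hcij
    rw [hblock i j hcij, sub_zero] at hdiff
    exact hlarge.not_gt hdiff
  · intro hcij
    have hsig := hsignal i j hcij
    have hrev := abs_sub_abs_le_abs_sub (Sig i j) (S i j)
    rw [abs_sub_comm] at hrev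
    linarith

theorem fromRel_threshold_reachable_iff (hblock : ∀ i j, c i ≠ c j → Sig i j = 0)
    (hsignal : ∀ i j, c i = c j → 2 * δ ≤ |Sig i j|) (hclose : ∀ i j, |S i j - Sig i j| < δ)
    (i j : ι) :
    (SimpleGraph.fromRel fun i j => δ < |S i j|).Reachable i j ↔ c i = c j := by
  refine SimpleGraph.reachable_iff_eq_of_adj_iff (fun a b => ?_) i j
  simp only [SimpleGraph.fromRel_adj, lt_abs_iff_of_abs_sub_lt hblock hsignal hclose, eq_comm,
    or_self]

end Thresholding

theorem exp_neg_mul_threshold_sq {x m a t : ℝ} (hx : 1 ≤ x) (hm : 0 < m) :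
    Real.exp (-(a * m * (t * Real.sqrt (Real.log x / m)) ^ 2)) = x ^ (-(a * t ^ 2)) := by
  have hlog : 0 ≤ Real.log x / m := div_nonneg (Real.log_nonneg hx) hm.le
  rw [mul_pow, Real.sq_sqrt hlog, Real.rpow_def_of_pos (by linarith)]
  congr 1
  field_simp

theorem measure_iUnion_le_card_nsmul {Ω ι : Type*} [MeasurableSpace Ω] [Fintype ι]
    (μ : Measure Ω) {s : ι → Set Ω} {b : ENNReal} (hs : ∀ i, μ (s i) ≤ b) :
    μ (⋃ i, s i) ≤ Fintype.card ι • b :=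
  (measure_iUnion_fintype_le μ s).trans (Finset.sum_le_card_nsmul _ _ _ fun i _ => hs i)

theorem threshold_graph_recovers_blocks_with_high_probability_general
    {Ω : Type*} [MeasurableSpace Ω] (μ : Measure Ω)
    (p n K : ℕ) (hp : 2 ≤ p) (hn : 1 ≤ n)
    (Sig : Matrix (Fin p) (Fin p) ℝ)
    (c : Fin p → Fin K)
    (hblock : ∀ i j : Fin p, c i ≠ c j → Sig i j = 0)
    (t : ℝ) (ht : 0 < t)
    (hsignal : ∀ i j : Fin p, c i = c j →
      2 * t * Real.sqrt (Real.log p / n) ≤ |Sig i j|)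
    (S : Ω → Matrix (Fin p) (Fin p) ℝ)
    (c₁ c₂ : ℝ)
    (hconc : ∀ (i j : Fin p) (δ : ℝ), 0 < δ →
      μ {ω | δ ≤ |S ω i j - Sig i j|} ≤ ENNReal.ofReal (c₁ * Real.exp (-(c₂ * n * δ ^ 2)))) :
    μ {ω | ¬ ∀ i j : Fin p,
        (SimpleGraph.fromRel
            (fun i j : Fin p => t * Real.sqrt (Real.log p / n) < |S ω i j|)).Reachable i j ↔
          c i = c j}
      ≤ ENNReal.ofReal (c₁ * (p : ℝ) ^ (2 - c₂ * t ^ 2)) := by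
  set δ := t * Real.sqrt (Real.log p / n)
  have hp1 : (1 : ℝ) < p := by exact_mod_cast hp
  have hn0 : (0 : ℝ) < n := by exact_mod_cast hn
  have hδ : 0 < δ := mul_pos ht (Real.sqrt_pos.2 (div_pos (Real.log_pos hp1) hn0))
  have hcover : {ω | ¬ ∀ i j : Fin p,
      (SimpleGraph.fromRel fun i j : Fin p => δ < |S ω i j|).Reachable i j ↔ c i = c j} ⊆
      ⋃ ij : Fin p × Fin p, {ω | δ ≤ |S ω ij.1 ij.2 - Sig ij.1 ij.2|} := by
    intro ω hbad
    by_contra hgood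
    simp only [Set.mem_iUnion, Set.mem_ofPred_eq, not_exists, not_le, Prod.forall] at hgood
    exact hbad (fromRel_threshold_reachable_iff hblock
      (fun i j hij => (mul_assoc 2 t _).symm.trans_le (hsignal i j hij)) hgood)
  have hexp : Real.exp (-(c₂ * n * δ ^ 2)) = (p : ℝ) ^ (-(c₂ * t ^ 2)) :=
    exp_neg_mul_threshold_sq hp1.le hn0
  have htail (ij : Fin p × Fin p) : μ {ω | δ ≤ |S ω ij.1 ij.2 - Sig ij.1 ij.2|} ≤
      ENNReal.ofReal (c₁ * (p : ℝ) ^ (-(c₂ * t ^ 2))) :=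
    hexp ▸ hconc ij.1 ij.2 δ hδ
  calc _ ≤ Fintype.card (Fin p × Fin p) • ENNReal.ofReal (c₁ * (p : ℝ) ^ (-(c₂ * t ^ 2))) :=
        (measure_mono hcover).trans (measure_iUnion_le_card_nsmul μ htail)
    _ = ENNReal.ofReal (c₁ * (p : ℝ) ^ (2 - c₂ * t ^ 2)) := by
        rw [nsmul_eq_mul, ← ENNReal.ofReal_natCast, ← ENNReal.ofReal_mul (by positivity),
          sub_eq_add_neg, Real.rpow_add (by linarith), Real.rpow_two]
        simp only [Fintype.card_prod, Fintype.card_fin, Nat.cast_mul]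
        ring_nf

/-- probabilistic recovery of the connected components. If Σ is block diagonal
with respect to the partition c with within-block entries at least 2t√(log p / n) in absolute
value, and the entries of the random matrix S concentrate around those of Σ at sub-Gaussian
rate c₁ exp(−c₂ n δ²), then with probability at least 1 − c₁ p^{2 − c₂ t²} the connected
components of the graph obtained by thresholding |S| at level t√(log p / n) are exactly the
fibers of c. -/
theorem threshold_graph_recovers_blocks_with_high_probability
    {Ω : Type*} [MeasurableSpace Ω] (μ : Measure Ω) [IsProbabilityMeasure μ]
    (p n K : ℕ) (hp : 2 ≤ p) (hn : 1 ≤ n)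
    (Sig : Matrix (Fin p) (Fin p) ℝ) (hSig : Sig.IsSymm)
    (c : Fin p → Fin K) (hc : Function.Surjective c)
    (hblock : ∀ i j : Fin p, c i ≠ c j → Sig i j = 0)
    (t : ℝ) (ht : 0 < t)
    (hsignal : ∀ i j : Fin p, c i = c j →
      2 * t * Real.sqrt (Real.log p / n) ≤ |Sig i j|)
    (S : Ω → Matrix (Fin p) (Fin p) ℝ)
    (hSmeas : ∀ i j : Fin p, Measurable (fun ω => S ω i j))
    (c₁ c₂ : ℝ) (hc₁ : 0 < c₁) (hc₂ : 0 < c₂)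
    (hconc : ∀ (i j : Fin p) (δ : ℝ), 0 < δ →
      μ {ω | δ ≤ |S ω i j - Sig i j|} ≤ ENNReal.ofReal (c₁ * Real.exp (-(c₂ * n * δ ^ 2)))) :
    μ {ω | ¬ ∀ i j : Fin p,
        (SimpleGraph.fromRel
            (fun i j : Fin p => t * Real.sqrt (Real.log p / n) < |S ω i j|)).Reachable i j ↔
          c i = c j}
      ≤ ENNReal.ofReal (c₁ * (p : ℝ) ^ (2 - c₂ * t ^ 2)) :=
  threshold_graph_recovers_blocks_with_high_probability_general μ p n K hp hn Sig c hblock t ht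
    hsignal S c₁ c₂ hconc
end

section
/- Let p ≥ 1 and let Θ be a p×p real symmetric positive definite matrix. Let G be the simple graph on {1,…,p} with an edge between distinct i and j if and only if Θ_{i j} ≠ 0, and suppose G is acyclic (a forest). Then for every pair of indices i, j lying in the same connected component of G, the (i, j) entry of the inverse matrix Σ = Θ⁻¹ is nonzero. -/
/-!
Let `x` be the `j`-th column of `Θ⁻¹`, so `Θ x = e_j` and `x j > 0`. Every edge `a — b` of the
forest is a bridge; let `S` be the side of it not containing `j`, with `a ∈ S`. Rows of `Θ` indexed
by `S` meet the complement of `S` only in the entry `Θ a b`, so the restriction `y` of `x` to `S`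
satisfies `yᵀ Θ y = -x_a Θ_ab x_b`. If `x_a x_b = 0`, positive definiteness forces `y = 0`, and then
row `a` of `Θ x = e_j` gives `Θ_ab x_b = 0`. Hence `x_a = 0 ↔ x_b = 0` along every edge, and `x`
vanishes nowhere on the component of `j`.
-/

open Matrix

namespace Matrix

variable {n : Type*} {Θ : Matrix n n ℝ}

def supportGraph (Θ : Matrix n n ℝ) : SimpleGraph n :=
  SimpleGraph.fromRel fun i j => Θ i j ≠ 0

lemma supportGraph_adj {i j : n} :
    Θ.supportGraph.Adj i j ↔ i ≠ j ∧ (Θ i j ≠ 0 ∨ Θ j i ≠ 0) :=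
  SimpleGraph.fromRel_adj _ _ _

lemma PosDef.supportGraph_adj (hΘ : Θ.PosDef) {i j : n} :
    Θ.supportGraph.Adj i j ↔ i ≠ j ∧ Θ i j ≠ 0 := by
  rw [Matrix.supportGraph_adj, show Θ j i = Θ i j by simpa using hΘ.isHermitian.apply i j, or_self]

variable [Fintype n]

lemma mulVec_indicator_compl_apply_of_cut [DecidableEq n] {S : Set n} {a b : n} (hb : b ∉ S)
    (hcut : ∀ r ∈ S, ∀ k ∉ S, Θ r k ≠ 0 → r = a ∧ k = b) (x : n → ℝ) {r : n} (hr : r ∈ S) :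
    (Θ *ᵥ Sᶜ.indicator x) r = (Pi.single a (Θ a b * x b) : n → ℝ) r := by
  have hterm : ∀ k ≠ b, Θ r k * Sᶜ.indicator x k = 0 := fun k hkb => by
    by_cases hk : k ∈ S
    · simp [hk]
    · simp [show Θ r k = 0 by by_contra h; exact hkb (hcut r hr k hk h).2]
  rw [mulVec, dotProduct, Finset.sum_eq_single b (fun k _ => hterm k) (by simp)]
  by_cases hra : r = a
  · subst hra; simp [hb]
  · simp [hra, show Θ r b = 0 by by_contra h; exact hra (hcut r hr b hb h).1]

theorem PosDef.apply_eq_zero_iff_of_cut (hΘ : Θ.PosDef) {S : Set n} {a b : n} (ha : a ∈ S)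
    (hb : b ∉ S) (hab : Θ a b ≠ 0) (hcut : ∀ r ∈ S, ∀ k ∉ S, Θ r k ≠ 0 → r = a ∧ k = b)
    {x : n → ℝ} (hx : ∀ r ∈ S, (Θ *ᵥ x) r = 0) : x a = 0 ↔ x b = 0 := by
  classical
  set y := S.indicator x
  have hΘy : ∀ r ∈ S, (Θ *ᵥ y) r = -(Pi.single a (Θ a b * x b) : n → ℝ) r := fun r hr => by
    rw [show y = x - Sᶜ.indicator x from eq_sub_of_add_eq (Set.indicator_self_add_compl S x),
      mulVec_sub, Pi.sub_apply, hx r hr,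
      mulVec_indicator_compl_apply_of_cut hb hcut x hr, zero_sub]
  have hquad : star y ⬝ᵥ Θ *ᵥ y = -(x a * (Θ a b * x b)) := by
    calc star y ⬝ᵥ Θ *ᵥ y = ∑ r, -(Pi.single a (x a * (Θ a b * x b)) : n → ℝ) r := by
          refine Finset.sum_congr rfl fun r _ => ?_
          by_cases hr : r ∈ S
          · by_cases hra : r = a
            · subst hra; simp [y, hr, hΘy r hr]
            · simp [y, hr, hΘy r hr, hra]
          · simp [y, hr, show r ≠ a from fun h => hr (h ▸ ha)]
      _ = -(x a * (Θ a b * x b)) := by simp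
  have hy : x a * x b = 0 → y = 0 := fun h => by
    by_contra hy0
    have := hΘ.dotProduct_mulVec_pos hy0
    rw [hquad, mul_left_comm, h, mul_zero, neg_zero] at this
    exact this.false
  constructor
  · intro hxa
    have := hΘy a ha
    rw [hy (by simp [hxa]), mulVec_zero, Pi.zero_apply, Pi.single_eq_same] at this
    exact (mul_eq_zero.mp (neg_eq_zero.mp this.symm)).resolve_left hab
  · intro hxb
    simpa [y, ha] using congrFun (hy (by simp [hxb])) a

section Forest

open SimpleGraph

variable {j : n} {x : n → ℝ}

lemma PosDef.apply_eq_zero_iff_of_not_reachable_deleteEdges (hΘ : Θ.PosDef)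
    (hx : ∀ r ≠ j, (Θ *ᵥ x) r = 0) {a b : n} (hab : Θ.supportGraph.Adj a b)
    (hbridge : ¬ (Θ.supportGraph.deleteEdges {s(a, b)}).Reachable a b)
    (hj : ¬ (Θ.supportGraph.deleteEdges {s(a, b)}).Reachable a j) :
    x a = 0 ↔ x b = 0 := by
  set H := Θ.supportGraph.deleteEdges {s(a, b)}
  refine hΘ.apply_eq_zero_iff_of_cut (S := {r | H.Reachable a r}) (Reachable.refl a) hbridge
    (hΘ.supportGraph_adj.mp hab).2 (fun r hr k hk hrk => ?_) (fun r hr => hx r (by grind))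
  have hadj : Θ.supportGraph.Adj r k := hΘ.supportGraph_adj.mpr ⟨by grind, hrk⟩
  by_contra hne
  refine hk (hr.trans (Adj.reachable ?_))
  simp only [H, deleteEdges_adj, hadj, Set.mem_singleton_iff, Sym2.eq_iff, true_and]
  grind

theorem PosDef.apply_eq_zero_iff_of_adj (hΘ : Θ.PosDef) (hG : Θ.supportGraph.IsAcyclic)
    (hx : ∀ r ≠ j, (Θ *ᵥ x) r = 0) {a b : n} (hab : Θ.supportGraph.Adj a b) :
    x a = 0 ↔ x b = 0 := by
  have hbridge : ¬ (Θ.supportGraph.deleteEdges {s(a, b)}).Reachable a b :=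
    isBridge_iff.mp (isAcyclic_iff_forall_adj_isBridge.mp hG hab)
  by_cases haj : (Θ.supportGraph.deleteEdges {s(a, b)}).Reachable a j
  · rw [Sym2.eq_swap] at haj hbridge
    exact (hΘ.apply_eq_zero_iff_of_not_reachable_deleteEdges hx hab.symm
      (fun h => hbridge h.symm) fun h => hbridge (haj.trans h.symm)).symm
  · exact hΘ.apply_eq_zero_iff_of_not_reachable_deleteEdges hx hab hbridge haj

theorem PosDef.apply_eq_zero_iff_of_reachable (hΘ : Θ.PosDef) (hG : Θ.supportGraph.IsAcyclic)
    (hx : ∀ r ≠ j, (Θ *ᵥ x) r = 0) {a b : n} (hab : Θ.supportGraph.Reachable a b) :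
    x a = 0 ↔ x b = 0 := by
  obtain ⟨w⟩ := hab
  induction w with
  | nil => rfl
  | cons hadj _ ih => exact (hΘ.apply_eq_zero_iff_of_adj hG hx hadj).trans ih

end Forest

end Matrix

theorem inverse_entry_nonzero_of_reachable_in_forest_general
    {p : ℕ} (Θ : Matrix (Fin p) (Fin p) ℝ) (hpd : Θ.PosDef)
    (hforest : (SimpleGraph.fromRel (fun i j : Fin p => Θ i j ≠ 0)).IsAcyclic) :
    ∀ i j : Fin p,
      (SimpleGraph.fromRel (fun i j : Fin p => Θ i j ≠ 0)).Reachable i j →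
        Θ⁻¹ i j ≠ 0 := by
  intro i j hij
  have hcol : ∀ r ≠ j, (Θ *ᵥ fun k => Θ⁻¹ k j) r = 0 := fun r hr => by
    rw [show (Θ *ᵥ fun k => Θ⁻¹ k j) r = (Θ * Θ⁻¹) r j from rfl,
      mul_nonsing_inv Θ ((isUnit_iff_isUnit_det Θ).mp hpd.isUnit), one_apply_ne hr]
  rw [Ne, hpd.apply_eq_zero_iff_of_reachable hforest hcol hij]
  exact hpd.inv.diag_pos.ne'

/-- if Θ is symmetric positive definite and the graph with an edge between
distinct i, j iff Θ_{ij} ≠ 0 is a forest, then for every pair i, j in the same connected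
component of that graph, the (i,j) entry of Σ = Θ⁻¹ is nonzero. -/
theorem inverse_entry_nonzero_of_reachable_in_forest
    {p : ℕ} (hp : 1 ≤ p)
    (Θ : Matrix (Fin p) (Fin p) ℝ) (hsymm : Θ.IsSymm) (hpd : Θ.PosDef)
    (hforest : (SimpleGraph.fromRel (fun i j : Fin p => Θ i j ≠ 0)).IsAcyclic) :
    ∀ i j : Fin p,
      (SimpleGraph.fromRel (fun i j : Fin p => Θ i j ≠ 0)).Reachable i j →
        Θ⁻¹ i j ≠ 0 :=
  inverse_entry_nonzero_of_reachable_in_forest_general Θ hpd hforest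
end
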